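/- arXiv:2602.22512 — 3 statements merged into one kernel-verified Lean document; each statement's English description precedes it below -/
import Mathlib

section
/- Let $a,b\in\mathbb{N}$ with $1\le a\le b$, $c,d\in\mathbb{R}$, and $0<\delta\le 1/2$. Then the Lebesgue measure of $\{x\in[0,1]:\|ax+c\|\cdot\|bx+d\|<\delta^2\}$ is at most $C(\delta^2\log(1/\delta)+\gcd(a,b)(\delta^2/(ab))^{1/2})$ for an absolute constant $C$. -/
/-!
Split the set according to the dyadic size of `‖ax + c‖`: where `‖ax + c‖ ≈ 2⁻ⁱ` the product
bound forces `‖bx + d‖ < 4δ²2ⁱ`, and only `O(log (1/δ))` scales occur.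

A piece `{‖ax + c‖ < α, ‖bx + d‖ < β}` is covered by the intervals `|ax + c - m| < α`,
`|bx + d - n| < β`, each of length at most `2 min (α/a) (β/b)`. The integer pairs involved
satisfy `|bm - an - (bc - ad)| < bα + aβ`; since `bm - an` is a multiple of `g = gcd(a, b)` and
determines `m` modulo `a/g`, there are `O(bα + aβ + g)` of them. So the piece has measure
`O(αβ + g min (α/a) (β/b))`. Over the dyadic scales the `αβ = 4δ²` terms add up to
`O(δ² log (1/δ))`, while the minima form two geometric series meeting where `2⁻ⁱ/a ≈ δ²2ⁱ/b`,
which add up to `O(√(δ²/(ab)))`.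
-/
open Set MeasureTheory

/-- Distance from `x` to the nearest integer. -/
noncomputable def nint (x : ℝ) : ℝ := |x - round x|

/-- `log` with the convention that `log x = 1` for `x ≤ e`. -/
noncomputable def clog (x : ℝ) : ℝ := max 1 (Real.log x)

lemma card_le_of_forall_dvd_sub {s : Finset ℤ} {q : ℤ} (hq : 0 < q) {L U : ℝ} (hLU : L ≤ U)
    (hs : ∀ m ∈ s, L ≤ m ∧ (m : ℝ) ≤ U) (hdvd : ∀ m ∈ s, ∀ m' ∈ s, q ∣ m - m') :
    (s.card : ℝ) ≤ (U - L) / q + 1 := by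
  rcases s.eq_empty_or_nonempty with rfl | hne
  · have : 0 ≤ (U - L) / q := div_nonneg (by linarith) (by exact_mod_cast hq.le)
    simp only [Finset.card_empty, CharP.cast_eq_zero]
    linarith
  set m₀ := s.min' hne
  have hm₀ : m₀ ∈ s := s.min'_mem hne
  have hq' : (0 : ℝ) < q := by exact_mod_cast hq
  have hquot : ∀ m ∈ s, q * ((m - m₀) / q).toNat = m - m₀ := by
    intro m hm
    rw [Int.toNat_of_nonneg (Int.ediv_nonneg (sub_nonneg.mpr (s.min'_le m hm)) hq.le)]
    exact Int.mul_ediv_cancel' (hdvd m hm m₀ hm₀)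
  have hmaps : ∀ m ∈ s, ((m - m₀) / q).toNat ∈ Finset.range (⌊(U - L) / q⌋₊ + 1) := by
    intro m hm
    have : (q : ℝ) * ((m - m₀) / q).toNat = m - m₀ := by exact_mod_cast hquot m hm
    rw [Finset.mem_range, Nat.lt_succ_iff, Nat.le_floor_iff (div_nonneg (by linarith) hq'.le),
      le_div_iff₀ hq']
    linarith [hs m hm, hs m₀ hm₀]
  have hinj : Set.InjOn (fun m ↦ ((m - m₀) / q).toNat) s := by
    intro m hm m' hm' h
    have := hquot m hm
    rw [show ((m - m₀) / q).toNat = ((m' - m₀) / q).toNat from h, hquot m' hm'] at this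
    linarith
  calc (s.card : ℝ) ≤ (Finset.range (⌊(U - L) / q⌋₊ + 1)).card := by
        exact_mod_cast Finset.card_le_card_of_injOn _ hmaps hinj
    _ = ⌊(U - L) / q⌋₊ + 1 := by simp
    _ ≤ (U - L) / q + 1 := by gcongr; exact Nat.floor_le (div_nonneg (by linarith) hq'.le)

lemma volume_abs_mul_add_lt_le {a : ℝ} (ha : 0 < a) (c r : ℝ) :
    volume {x : ℝ | |a * x + c| < r} ≤ ENNReal.ofReal (2 * r / a) := by
  have hsub : {x : ℝ | |a * x + c| < r} ⊆ Ioo ((-c - r) / a) ((-c + r) / a) := by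
    intro x (hx : |a * x + c| < r)
    obtain ⟨h₁, h₂⟩ := abs_lt.mp hx
    constructor
    · rw [div_lt_iff₀ ha]; linarith
    · rw [lt_div_iff₀ ha]; linarith
  calc volume {x : ℝ | |a * x + c| < r} ≤ volume (Ioo ((-c - r) / a) ((-c + r) / a)) :=
        measure_mono hsub
    _ = ENNReal.ofReal (2 * r / a) := by rw [Real.volume_Ioo]; ring_nf

/-- Candidates for `(round (a * x + c), round (b * x + d))`, `x ∈ [0, 1]`, when the two distances
are below `α` and `β`: the box only makes the set finite, the filter is the real constraint. -/
noncomputable def nearPairs (a b : ℕ) (c d α β : ℝ) : Finset (ℤ × ℤ) :=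
  {p ∈ Finset.Icc ⌊c⌋ (⌊c⌋ + a + 1) ×ˢ Finset.Icc (⌊d⌋ - ⌈β⌉) (⌊d⌋ + b + ⌈β⌉ + 1) |
    |b * p.1 - a * p.2 - (b * c - a * d)| < b * α + a * β}

lemma div_gcd_dvd_sub_of_mul_sub_mul_eq {a b : ℕ} (ha : 0 < a) {m n m' n' : ℤ}
    (h : b * m - a * n = b * m' - a * n') : (a : ℤ) / Nat.gcd a b ∣ m - m' := by
  have hmod : (b : ℤ) * m' ≡ b * m [ZMOD a] :=
    (Int.modEq_iff_dvd).mpr ⟨n - n', by linear_combination h⟩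
  simpa using (Int.ModEq.cancel_left_div_gcd (by exact_mod_cast ha) hmod).dvd

lemma subset_biUnion_nearPairs {a : ℕ} (ha : 0 < a) (b : ℕ) (c d : ℝ) {α : ℝ} (hα : α ≤ 1) (β : ℝ) :
    {x ∈ Icc (0:ℝ) 1 | nint (a * x + c) < α ∧ nint (b * x + d) < β} ⊆
      ⋃ p ∈ nearPairs a b c d α β, {x | |a * x + c - p.1| < α ∧ |b * x + d - p.2| < β} := by
  rintro x ⟨⟨hx₀, hx₁⟩, hm, hn⟩
  set m := round ((a : ℝ) * x + c)
  set n := round ((b : ℝ) * x + d)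
  replace hm : |(a : ℝ) * x + c - m| < α := hm
  replace hn : |(b : ℝ) * x + d - n| < β := hn
  refine mem_iUnion₂.mpr ⟨(m, n), ?_, hm, hn⟩
  obtain ⟨hm₁, hm₂⟩ := abs_lt.mp hm
  obtain ⟨hn₁, hn₂⟩ := abs_lt.mp hn
  have hax : (a : ℝ) * x ≤ a := mul_le_of_le_one_right a.cast_nonneg hx₁
  have hbx : (b : ℝ) * x ≤ b := mul_le_of_le_one_right b.cast_nonneg hx₁
  have hax₀ : 0 ≤ (a : ℝ) * x := by positivity
  have hbx₀ : 0 ≤ (b : ℝ) * x := by positivity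
  have hc := Int.floor_le c
  have hc' := Int.lt_floor_add_one c
  have hd := Int.floor_le d
  have hd' := Int.lt_floor_add_one d
  have hβ := Int.le_ceil β
  simp only [nearPairs, Finset.mem_filter, Finset.mem_product, Finset.mem_Icc]
  refine ⟨⟨⟨?_, ?_⟩, ?_, ?_⟩, ?_⟩
  · have : (⌊c⌋ : ℝ) < m + 1 := by linarith
    exact Int.lt_add_one_iff.mp (by exact_mod_cast this)
  · have : (m : ℝ) < ⌊c⌋ + a + 1 + 1 := by linarith
    exact Int.lt_add_one_iff.mp (by exact_mod_cast this)
  · have : (⌊d⌋ - ⌈β⌉ : ℝ) < n + 1 := by linarith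
    exact Int.lt_add_one_iff.mp (by exact_mod_cast this)
  · have : (n : ℝ) < ⌊d⌋ + b + ⌈β⌉ + 1 := by linarith
    exact (by exact_mod_cast this : n < _).le
  · have hid : (b : ℝ) * m - a * n - (b * c - a * d)
        = a * (b * x + d - n) - b * (a * x + c - m) := by ring
    rw [hid]
    calc |(a : ℝ) * (b * x + d - n) - b * (a * x + c - m)|
        ≤ a * |b * x + d - n| + b * |a * x + c - m| := by
          simpa only [abs_mul, Nat.abs_cast] using
            abs_sub ((a : ℝ) * (b * x + d - n)) (b * (a * x + c - m))
      _ < b * α + a * β := by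
          have := mul_lt_mul_of_pos_left hn (show (0 : ℝ) < a by exact_mod_cast ha)
          have := mul_le_mul_of_nonneg_left hm.le (b.cast_nonneg : (0 : ℝ) ≤ b)
          linarith

lemma card_filter_nearPairs_le {a : ℕ} (ha : 0 < a) (b : ℕ) (c d α β : ℝ) (w : ℤ) :
    ({p ∈ nearPairs a b c d α β | b * p.1 - a * p.2 = w}.card : ℝ) ≤ 3 * Nat.gcd a b := by
  set s := {p ∈ nearPairs a b c d α β | b * p.1 - a * p.2 = w}
  set g := Nat.gcd a b
  have hg : 0 < g := Nat.gcd_pos_of_pos_left b ha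
  have hga : (g : ℤ) ∣ a := Int.natCast_dvd_natCast.mpr (Nat.gcd_dvd_left a b)
  have hq : 0 < (a : ℤ) / g :=
    Int.ediv_pos_of_pos_of_dvd (by exact_mod_cast ha) (by exact_mod_cast hg.le) hga
  have hqR : (((a : ℤ) / g : ℤ) : ℝ) = a / g := by
    rw [Int.cast_div hga (by exact_mod_cast hg.ne'), Int.cast_natCast, Int.cast_natCast]
  have hmem : ∀ p ∈ s, (p.1 ∈ Finset.Icc ⌊c⌋ (⌊c⌋ + a + 1)) ∧ b * p.1 - a * p.2 = w := by
    intro p hp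
    simp only [s, nearPairs, Finset.mem_filter, Finset.mem_product] at hp
    exact ⟨hp.1.1.1, hp.2⟩
  have hinj : Set.InjOn Prod.fst (s : Set (ℤ × ℤ)) := by
    intro p hp p' hp' h
    have e := (hmem p hp).2.trans (hmem p' hp').2.symm
    rw [h] at e
    exact Prod.ext h (mul_left_cancel₀ (show (a : ℤ) ≠ 0 by exact_mod_cast ha.ne') (by linarith))
  have hbounds : ∀ m ∈ s.image Prod.fst, (⌊c⌋ : ℝ) ≤ m ∧ (m : ℝ) ≤ ⌊c⌋ + a + 1 := by
    simp only [Finset.mem_image]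
    rintro _ ⟨p, hp, rfl⟩
    obtain ⟨h₁, h₂⟩ := Finset.mem_Icc.mp (hmem p hp).1
    exact ⟨by exact_mod_cast h₁, by exact_mod_cast h₂⟩
  have hdvd : ∀ m ∈ s.image Prod.fst, ∀ m' ∈ s.image Prod.fst, (a : ℤ) / g ∣ m - m' := by
    simp only [Finset.mem_image]
    rintro _ ⟨p, hp, rfl⟩ _ ⟨p', hp', rfl⟩
    exact div_gcd_dvd_sub_of_mul_sub_mul_eq ha ((hmem p hp).2.trans (hmem p' hp').2.symm)
  have haR : (1 : ℝ) ≤ a := by exact_mod_cast ha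
  have hgR : (1 : ℝ) ≤ g := by exact_mod_cast hg
  calc (s.card : ℝ) = (s.image Prod.fst).card := by rw [Finset.card_image_of_injOn hinj]
    _ ≤ ((⌊c⌋ + a + 1 : ℝ) - ⌊c⌋) / ((a : ℤ) / g : ℤ) + 1 :=
        card_le_of_forall_dvd_sub hq (by linarith) hbounds hdvd
    _ = g * (a + 1) / a + 1 := by rw [hqR]; field_simp; ring
    _ ≤ 3 * g := by
        rw [div_add_one (by positivity), div_le_iff₀ (by positivity)]
        nlinarith [mul_le_mul haR hgR zero_le_one (by linarith)]

lemma card_image_nearPairs_le {a : ℕ} (ha : 0 < a) (b : ℕ) (c d : ℝ) {α β : ℝ}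
    (hα : 0 ≤ α) (hβ : 0 ≤ β) :
    (((nearPairs a b c d α β).image fun p ↦ (b : ℤ) * p.1 - a * p.2).card : ℝ) ≤
      2 * (b * α + a * β) / Nat.gcd a b + 1 := by
  set g := Nat.gcd a b
  have hg : (0 : ℤ) < g := by exact_mod_cast Nat.gcd_pos_of_pos_left b ha
  have hga : (g : ℤ) ∣ a := Int.natCast_dvd_natCast.mpr (Nat.gcd_dvd_left a b)
  have hgb : (g : ℤ) ∣ b := Int.natCast_dvd_natCast.mpr (Nat.gcd_dvd_right a b)
  set W := (nearPairs a b c d α β).image fun p ↦ (b : ℤ) * p.1 - a * p.2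
  have hbounds : ∀ w ∈ W,
      (b * c - a * d) - (b * α + a * β) ≤ (w : ℝ) ∧
        (w : ℝ) ≤ (b * c - a * d) + (b * α + a * β) := by
    simp only [W, Finset.mem_image, nearPairs, Finset.mem_filter]
    rintro _ ⟨p, ⟨-, hp⟩, rfl⟩
    obtain ⟨h₁, h₂⟩ := abs_lt.mp hp
    push_cast
    constructor <;> linarith
  have hdvd : ∀ w ∈ W, ∀ w' ∈ W, (g : ℤ) ∣ w - w' := by
    simp only [W, Finset.mem_image]
    rintro _ ⟨p, -, rfl⟩ _ ⟨p', -, rfl⟩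
    exact ((hgb.mul_right _).sub (hga.mul_right _)).sub ((hgb.mul_right _).sub (hga.mul_right _))
  calc _ ≤ ((b * c - a * d) + (b * α + a * β) - ((b * c - a * d) - (b * α + a * β))) /
        ((g : ℤ) : ℝ) + 1 := card_le_of_forall_dvd_sub hg (by nlinarith [hα, hβ]) hbounds hdvd
    _ = 2 * (b * α + a * β) / g + 1 := by push_cast; ring

lemma card_nearPairs_le {a : ℕ} (ha : 0 < a) (b : ℕ) (c d : ℝ) {α β : ℝ}
    (hα : 0 ≤ α) (hβ : 0 ≤ β) :
    ((nearPairs a b c d α β).card : ℝ) ≤ 6 * (b * α + a * β) + 3 * Nat.gcd a b := by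
  have hg : (0 : ℝ) < Nat.gcd a b := by exact_mod_cast Nat.gcd_pos_of_pos_left b ha
  have hfib := Finset.card_le_mul_card_image (f := fun p : ℤ × ℤ ↦ (b : ℤ) * p.1 - a * p.2)
    (nearPairs a b c d α β) (3 * Nat.gcd a b)
    fun w _ ↦ by exact_mod_cast card_filter_nearPairs_le ha b c d α β w
  calc ((nearPairs a b c d α β).card : ℝ)
      ≤ 3 * Nat.gcd a b * ((nearPairs a b c d α β).image fun p ↦ (b : ℤ) * p.1 - a * p.2).card := by
        exact_mod_cast hfib
    _ ≤ 3 * Nat.gcd a b * (2 * (b * α + a * β) / Nat.gcd a b + 1) := by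
        gcongr; exact card_image_nearPairs_le ha b c d hα hβ
    _ = 6 * (b * α + a * β) + 3 * Nat.gcd a b := by field_simp; ring

lemma volume_nint_lt_and_nint_lt_le {a b : ℕ} (ha : 0 < a) (hb : 0 < b) (c d : ℝ) {α β : ℝ}
    (hα₀ : 0 ≤ α) (hα₁ : α ≤ 1) (hβ : 0 ≤ β) :
    volume {x ∈ Icc (0:ℝ) 1 | nint (a * x + c) < α ∧ nint (b * x + d) < β} ≤
      ENNReal.ofReal (24 * α * β + 6 * Nat.gcd a b * min (α / a) (β / b)) := by
  have haR : (0 : ℝ) < a := by exact_mod_cast ha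
  have hbR : (0 : ℝ) < b := by exact_mod_cast hb
  set μ := min (α / a) (β / b)
  have hμ : 0 ≤ μ := le_min (by positivity) (by positivity)
  have hpiece : ∀ p : ℤ × ℤ, volume {x | |a * x + c - p.1| < α ∧ |b * x + d - p.2| < β} ≤
      ENNReal.ofReal (2 * μ) := by
    intro p
    rw [mul_min_of_nonneg _ _ zero_le_two, ENNReal.ofReal_min, ← mul_div_assoc, ← mul_div_assoc]
    refine le_min ((measure_mono fun x hx ↦ ?_).trans (volume_abs_mul_add_lt_le haR (c - p.1) α))
      ((measure_mono fun x hx ↦ ?_).trans (volume_abs_mul_add_lt_le hbR (d - p.2) β))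
    · simpa only [mem_ofPred_eq, add_sub_assoc] using hx.1
    · simpa only [mem_ofPred_eq, add_sub_assoc] using hx.2
  have hσμ : (b * α + a * β) * μ ≤ 2 * (α * β) := by
    have h₁ : b * α * μ ≤ b * α * (β / b) :=
      mul_le_mul_of_nonneg_left (min_le_right _ _) (by positivity)
    have h₂ : a * β * μ ≤ a * β * (α / a) :=
      mul_le_mul_of_nonneg_left (min_le_left _ _) (by positivity)
    have e₁ : b * α * (β / b) = α * β := by field_simp
    have e₂ : a * β * (α / a) = α * β := by field_simp
    linarith
  have hcard := card_nearPairs_le ha b c d hα₀ hβ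
  calc volume {x ∈ Icc (0:ℝ) 1 | nint (a * x + c) < α ∧ nint (b * x + d) < β}
      ≤ volume (⋃ p ∈ nearPairs a b c d α β, {x | |a * x + c - p.1| < α ∧ |b * x + d - p.2| < β}) :=
        measure_mono (subset_biUnion_nearPairs ha b c d hα₁ β)
    _ ≤ ∑ p ∈ nearPairs a b c d α β, volume {x | |a * x + c - p.1| < α ∧ |b * x + d - p.2| < β} :=
        measure_biUnion_finset_le _ _
    _ ≤ ∑ _p ∈ nearPairs a b c d α β, ENNReal.ofReal (2 * μ) := Finset.sum_le_sum fun p _ ↦ hpiece p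
    _ = ENNReal.ofReal ((nearPairs a b c d α β).card * (2 * μ)) := by
        rw [Finset.sum_const, nsmul_eq_mul, ← ENNReal.ofReal_natCast,
          ← ENNReal.ofReal_mul (by positivity)]
    _ ≤ ENNReal.ofReal (24 * α * β + 6 * Nat.gcd a b * μ) := by
        gcongr
        nlinarith [mul_le_mul_of_nonneg_right hcard hμ]

lemma sum_min_div_pow_mul_pow_le_add (u v : ℝ) (hu : 0 ≤ u) (hv : 0 ≤ v) (K n : ℕ) :
    ∑ k ∈ Finset.range K, min (u / 2 ^ k) (v * 2 ^ k) ≤ v * (2 ^ n - 1) + 2 * u / 2 ^ n := by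
  calc ∑ k ∈ Finset.range K, min (u / 2 ^ k) (v * 2 ^ k)
      ≤ ∑ k ∈ Finset.range (max K n), min (u / 2 ^ k) (v * 2 ^ k) :=
        Finset.sum_le_sum_of_subset_of_nonneg (Finset.range_subset_range.mpr (le_max_left K n))
          fun _ _ _ ↦ by positivity
    _ = ∑ k ∈ Finset.range n, min (u / 2 ^ k) (v * 2 ^ k)
          + ∑ k ∈ Finset.Ico n (max K n), min (u / 2 ^ k) (v * 2 ^ k) :=
        (Finset.sum_range_add_sum_Ico _ (le_max_right K n)).symm
    _ ≤ ∑ k ∈ Finset.range n, v * 2 ^ k + ∑ k ∈ Finset.Ico n (max K n), u * (1 / 2) ^ k := by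
        gcongr with k
        · exact min_le_right _ _
        · rw [one_div_pow, mul_one_div]; exact min_le_left _ _
    _ ≤ v * (2 ^ n - 1) + u * ((1 / 2) ^ n / (1 - 1 / 2)) := by
        rw [← Finset.mul_sum, ← Finset.mul_sum, geom_sum_eq (by norm_num : (2 : ℝ) ≠ 1)]
        gcongr
        · norm_num
        · exact geom_sum_Ico_le_of_lt_one (by norm_num) (by norm_num)
    _ = v * (2 ^ n - 1) + 2 * u / 2 ^ n := by rw [one_div_pow]; field_simp; ring

lemma sum_min_div_pow_mul_pow_le {u v : ℝ} (hu : 0 < u) (hv : 0 < v) (K : ℕ) :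
    ∑ k ∈ Finset.range K, min (u / 2 ^ k) (v * 2 ^ k) ≤ 5 * √(u * v) := by
  rcases le_or_gt u v with huv | hvu
  · have hsqrt : u ≤ √(u * v) := Real.le_sqrt_of_sq_le (by nlinarith)
    have := sum_min_div_pow_mul_pow_le_add u v hu.le hv.le K 0
    norm_num at this
    linarith
  · set r := √(u / v)
    have hr : 1 ≤ r := Real.one_le_sqrt.mpr ((one_le_div hv).mpr hvu.le)
    obtain ⟨n, hn₁, hn₂⟩ := exists_nat_pow_near hr one_lt_two
    have hu' : u = v * r ^ 2 := by rw [Real.sq_sqrt (by positivity)]; field_simp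
    have huv : √(u * v) = v * r := by
      rw [hu', show v * r ^ 2 * v = (v * r) ^ 2 by ring, Real.sqrt_sq (by positivity)]
    have htail : 2 * (v * r ^ 2) / 2 ^ n ≤ 4 * (v * r) := by
      rw [div_le_iff₀ (by positivity)]
      rw [pow_succ] at hn₂
      nlinarith [mul_le_mul_of_nonneg_left hn₂.le (by positivity : (0 : ℝ) ≤ v * r)]
    calc _ ≤ v * (2 ^ n - 1) + 2 * u / 2 ^ n := sum_min_div_pow_mul_pow_le_add u v hu.le hv.le K n
      _ ≤ 5 * √(u * v) := by rw [huv, hu']; nlinarith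

lemma exists_dyadic_scale {t s ε : ℝ} (ht : t ≤ 1 / 2) (hs : s ≤ 1 / 2)
    (hε₀ : 0 < ε) (hε : ε ≤ 1) (hts : t * s < ε) :
    ∃ i < Nat.log 2 ⌊ε⁻¹⌋₊ + 1, t < 1 / 2 ^ i ∧ s < 4 * ε * 2 ^ i := by
  set K := Nat.log 2 ⌊ε⁻¹⌋₊
  rcases lt_or_ge t ε with htε | htε
  · have hfloor : ⌊ε⁻¹⌋₊ ≠ 0 := (Nat.floor_pos.mpr ((one_le_inv₀ hε₀).mpr hε)).ne'
    have hK₁ : (2 : ℝ) ^ K ≤ ε⁻¹ := by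
      calc (2 : ℝ) ^ K ≤ ⌊ε⁻¹⌋₊ := by exact_mod_cast Nat.pow_log_le_self 2 hfloor
        _ ≤ ε⁻¹ := Nat.floor_le (by positivity)
    have hK₂ : ε⁻¹ < 2 ^ (K + 1) := by
      calc ε⁻¹ < ⌊ε⁻¹⌋₊ + 1 := Nat.lt_floor_add_one _
        _ ≤ 2 ^ (K + 1) := by exact_mod_cast Nat.lt_pow_succ_log_self one_lt_two _
    refine ⟨K, K.lt_succ_self, ?_, ?_⟩
    · calc t < ε := htε
        _ ≤ 1 / 2 ^ K := by rw [le_div_iff₀ (by positivity)]; nlinarith [mul_inv_cancel₀ hε₀.ne']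
    · have := mul_lt_mul_of_pos_left hK₂ hε₀
      rw [mul_inv_cancel₀ hε₀.ne', pow_succ] at this
      linarith
  · have ht₀ : 0 < t := hε₀.trans_le htε
    obtain ⟨i, hi₁, hi₂⟩ := exists_nat_pow_near (x := 1 / (2 * t))
      (by rw [le_div_iff₀ (by positivity)]; linarith) one_lt_two
    rw [le_div_iff₀ (by positivity)] at hi₁
    rw [div_lt_iff₀ (by positivity), pow_succ] at hi₂
    refine ⟨i, ?_, ?_, ?_⟩
    · have hpow : 2 ^ (i + 1) ≤ ⌊ε⁻¹⌋₊ := by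
        refine Nat.le_floor ?_
        push_cast
        calc (2 : ℝ) ^ (i + 1) = 2 ^ (i + 1) * ε * ε⁻¹ := by field_simp
          _ ≤ 1 * ε⁻¹ := by gcongr; rw [pow_succ]; nlinarith
          _ = ε⁻¹ := one_mul _
      have := Nat.le_log_of_pow_le one_lt_two hpow
      omega
    · rw [lt_div_iff₀ (by positivity)]; nlinarith
    · nlinarith [mul_pos (by positivity : (0 : ℝ) < 4 * 2 ^ i) (sub_pos.mpr hts)]

lemma natLog_floor_inv_le {ε : ℝ} (hε₀ : 0 < ε) (hε : ε ≤ 1) :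
    (Nat.log 2 ⌊ε⁻¹⌋₊ : ℝ) ≤ 2 * Real.log ε⁻¹ := by
  have hfloor : (0 : ℝ) < ⌊ε⁻¹⌋₊ := by
    exact_mod_cast Nat.floor_pos.mpr ((one_le_inv₀ hε₀).mpr hε)
  have hlog : 0 ≤ Real.log ε⁻¹ := Real.log_nonneg ((one_le_inv₀ hε₀).mpr hε)
  calc (Nat.log 2 ⌊ε⁻¹⌋₊ : ℝ) ≤ Real.logb 2 ⌊ε⁻¹⌋₊ := by exact_mod_cast Real.natLog_le_logb _ _
    _ ≤ Real.logb 2 ε⁻¹ := Real.logb_le_logb_of_le one_lt_two hfloor (Nat.floor_le (by positivity))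
    _ ≤ 2 * Real.log ε⁻¹ := by
        rw [Real.logb, div_le_iff₀ (Real.log_pos one_lt_two)]
        nlinarith [Real.log_two_gt_d9]

lemma volume_nint_mul_nint_lt_le {a b : ℕ} (ha : 0 < a) (hb : 0 < b) (c d : ℝ) {ε : ℝ}
    (hε₀ : 0 < ε) (hε : ε ≤ 1) :
    volume {x ∈ Icc (0:ℝ) 1 | nint (a * x + c) * nint (b * x + d) < ε} ≤
      ENNReal.ofReal (96 * (Nat.log 2 ⌊ε⁻¹⌋₊ + 1) * ε + 60 * Nat.gcd a b * √(ε / (a * b))) := by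
  set K := Nat.log 2 ⌊ε⁻¹⌋₊
  set P : ℕ → Set ℝ := fun i ↦
    {x ∈ Icc (0:ℝ) 1 | nint (a * x + c) < 1 / 2 ^ i ∧ nint (b * x + d) < 4 * ε * 2 ^ i}
  set B : ℕ → ℝ := fun i ↦
    96 * ε + 6 * Nat.gcd a b * min ((1 / (a : ℝ)) / 2 ^ i) ((4 * ε / b) * 2 ^ i)
  have hcover : {x ∈ Icc (0:ℝ) 1 | nint (a * x + c) * nint (b * x + d) < ε} ⊆
      ⋃ i ∈ Finset.range (K + 1), P i := by
    rintro x ⟨hx, hprod⟩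
    obtain ⟨i, hi, h₁, h₂⟩ := exists_dyadic_scale (abs_sub_round _) (abs_sub_round _) hε₀ hε hprod
    exact mem_iUnion₂.mpr ⟨i, Finset.mem_range.mpr hi, hx, h₁, h₂⟩
  have hpiece : ∀ i, volume (P i) ≤ ENNReal.ofReal (B i) := fun i ↦ by
    refine (volume_nint_lt_and_nint_lt_le ha hb c d (by positivity)
      (div_le_one_of_le₀ (one_le_pow₀ one_le_two) (by positivity)) (by positivity)).trans_eq ?_
    simp only [B]
    rw [div_right_comm, mul_div_right_comm (4 * ε)]
    congr 1
    field_simp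
    ring
  have hgeom : ∑ i ∈ Finset.range (K + 1), min ((1 / (a : ℝ)) / 2 ^ i) ((4 * ε / b) * 2 ^ i) ≤
      10 * √(ε / (a * b)) := by
    refine (sum_min_div_pow_mul_pow_le (by positivity) (by positivity) (K + 1)).trans_eq ?_
    rw [show 1 / (a : ℝ) * (4 * ε / b) = 2 ^ 2 * (ε / (a * b)) by ring,
      Real.sqrt_mul (by positivity), Real.sqrt_sq zero_le_two]
    ring
  calc volume {x ∈ Icc (0:ℝ) 1 | nint (a * x + c) * nint (b * x + d) < ε}
      ≤ ∑ i ∈ Finset.range (K + 1), volume (P i) :=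
        (measure_mono hcover).trans (measure_biUnion_finset_le _ _)
    _ ≤ ∑ i ∈ Finset.range (K + 1), ENNReal.ofReal (B i) := Finset.sum_le_sum fun i _ ↦ hpiece i
    _ = ENNReal.ofReal (∑ i ∈ Finset.range (K + 1), B i) :=
        (ENNReal.ofReal_sum_of_nonneg fun i _ ↦ by positivity).symm
    _ ≤ _ := by
        gcongr
        simp only [B, Finset.sum_add_distrib, Finset.sum_const, Finset.card_range, nsmul_eq_mul,
          ← Finset.mul_sum]
        push_cast
        nlinarith [mul_le_mul_of_nonneg_left hgeom (by positivity : (0 : ℝ) ≤ 6 * Nat.gcd a b)]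

theorem stmt7 :
    ∃ C : ℝ, 0 < C ∧ ∀ (a b : ℕ) (c d δ : ℝ), 1 ≤ a → a ≤ b → 0 < δ → δ ≤ 1 / 2 →
      volume {x ∈ Icc (0:ℝ) 1 | nint (a * x + c) * nint (b * x + d) < δ ^ 2}
        ≤ ENNReal.ofReal (C * (δ ^ 2 * clog (1 / δ)
            + (Nat.gcd a b : ℝ) * (δ ^ 2 / (a * b)) ^ ((1:ℝ) / 2))) := by
  refine ⟨480, by norm_num, fun a b c d δ ha hab hδ hδ₂ ↦ ?_⟩
  have hε₀ : 0 < δ ^ 2 := by positivity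
  have hε₁ : δ ^ 2 ≤ 1 := by nlinarith
  refine (volume_nint_mul_nint_lt_le ha (Nat.lt_of_lt_of_le ha hab) c d hε₀ hε₁).trans
    (ENNReal.ofReal_le_ofReal ?_)
  have hK : (Nat.log 2 ⌊(δ ^ 2)⁻¹⌋₊ : ℝ) + 1 ≤ 5 * clog (1 / δ) := by
    have hlog : Real.log (δ ^ 2)⁻¹ = 2 * Real.log (1 / δ) := by
      rw [one_div, ← inv_pow, Real.log_pow]; push_cast; ring
    have := natLog_floor_inv_le hε₀ hε₁
    have : 1 ≤ clog (1 / δ) := le_max_left _ _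
    have : Real.log (1 / δ) ≤ clog (1 / δ) := le_max_right _ _
    linarith
  rw [← Real.sqrt_eq_rpow]
  nlinarith [mul_le_mul_of_nonneg_left hK (by positivity : (0 : ℝ) ≤ 96 * δ ^ 2),
    (by positivity : (0 : ℝ) ≤ Nat.gcd a b * √(δ ^ 2 / (a * b)))]
end

section
/- Let $\{a_n\},\{b_n\},\{c_n\},\{d_n\}$ be real sequences with $1\le a_n\le b_n$ for all $n$, and $\psi:\mathbb{N}\to[0,\infty)$. If $\sum_{n:\psi(n)>0}\big[\psi(n)\log\frac{1}{\psi(n)}+\frac{\psi(n)}{a_n}\log b_n\log\frac{1}{\psi(n)}+(\psi(n)a_n/b_n)^{1/2}+(\psi(n)/(a_nb_n))^{1/2}\log b_n\big]<\infty$, then the Lebesgue measure of $M(\psi)=\{x\in[0,1]:\|a_nx+c_n\|\cdot\|b_nx+d_n\|<\psi(n)\text{ for infinitely many }n\}$ is zero. -/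
open Set MeasureTheory

/-!
Write `u = ‖a x + c‖`, `v = ‖b x + d‖` and `ε = √(ψ a / b)`. Points with `u` below the dyadic
scale `2⁻ᴷ ≈ max ε ψ` form `O(a)` intervals of length `O(2⁻ᴷ / a)`. Otherwise `u` lies in a
dyadic range `[2⁻ᵏ⁻¹, 2⁻ᵏ]` with `k ≤ K`, forcing `v ≤ 2ᵏ⁺¹ ψ`; counting the `O(a)` intervals
where `u ≤ 2⁻ᵏ` and, inside each, the `O(b 2⁻ᵏ / a + 1)` intervals where `v` is small gives
measure `O(ψ + (a / b) ψ 2ᵏ)`. Summing over `k ≤ K ≲ log (1 / ψ)` bounds the measure of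
`{u v < ψ}` by `O(ψ log (1 / ψ) + ε)`, and the first Borel–Cantelli lemma concludes.
-/

open scoped ENNReal

lemma nint_nonneg (x : ℝ) : 0 ≤ nint x := abs_nonneg _

lemma nint_le_half (x : ℝ) : nint x ≤ 1 / 2 := abs_sub_round x

lemma one_le_clog (x : ℝ) : 1 ≤ clog x := le_max_left _ _

lemma natCast_card_Icc_ceil_floor_le {A B : ℝ} (h : A ≤ B + 1) :
    ((Finset.Icc ⌈A⌉ ⌊B⌋).card : ℝ) ≤ B - A + 1 := by
  have hcard : ((Finset.Icc ⌈A⌉ ⌊B⌋).card : ℤ) = max (⌊B⌋ + 1 - ⌈A⌉) 0 := by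
    rw [Int.card_Icc, Int.toNat_eq_max]
  have hcard' : ((Finset.Icc ⌈A⌉ ⌊B⌋).card : ℝ) = max ((⌊B⌋ : ℝ) + 1 - ⌈A⌉) 0 := by
    exact_mod_cast hcard
  rw [hcard']
  exact max_le (by linarith [Int.le_ceil A, Int.floor_le B]) (by linarith)

lemma measure_le_of_subset_biUnion {α ι : Type*} [MeasurableSpace α] {μ : Measure α}
    {T : Set α} {F : Finset ι} {S : ι → Set α} {N c : ℝ} (hT : T ⊆ ⋃ i ∈ F, S i)
    (hS : ∀ i ∈ F, μ (S i) ≤ ENNReal.ofReal c) (hF : (F.card : ℝ) ≤ N) (hc : 0 ≤ c) :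
    μ T ≤ ENNReal.ofReal (N * c) :=
  calc μ T ≤ ∑ i ∈ F, μ (S i) := (measure_mono hT).trans (measure_biUnion_finset_le F S)
    _ ≤ F.card • ENNReal.ofReal c := Finset.sum_le_card_nsmul _ _ _ hS
    _ = ENNReal.ofReal (F.card * c) := by
      rw [nsmul_eq_mul, ENNReal.ofReal_mul (Nat.cast_nonneg _), ENNReal.ofReal_natCast]
    _ ≤ ENNReal.ofReal (N * c) := ENNReal.ofReal_le_ofReal (by gcongr)

lemma setOf_nint_le_subset_biUnion {β : ℝ} (hβ : 0 < β) (s t d δ : ℝ) :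
    {x ∈ Icc s t | nint (β * x + d) ≤ δ} ⊆
      ⋃ m ∈ Finset.Icc ⌈β * s + d - δ⌉ ⌊β * t + d + δ⌋,
        Icc ((m - δ - d) / β) ((m + δ - d) / β) := by
  rintro x ⟨⟨hxs, hxt⟩, hx⟩
  obtain ⟨hlo, hhi⟩ := abs_le.1 (hx : |β * x + d - round (β * x + d)| ≤ δ)
  have hs : β * s ≤ β * x := by gcongr
  have ht : β * x ≤ β * t := by gcongr
  refine mem_iUnion₂.2 ⟨round (β * x + d), Finset.mem_Icc.2 ⟨?_, ?_⟩, ?_, ?_⟩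
  · rw [Int.ceil_le]; linarith
  · rw [Int.le_floor]; linarith
  · rw [div_le_iff₀ hβ]; linarith
  · rw [le_div_iff₀ hβ]; linarith

lemma volume_setOf_nint_le_le {β : ℝ} (hβ : 0 < β) {s t δ : ℝ} (hst : s ≤ t) (hδ : 0 ≤ δ)
    (d : ℝ) :
    volume {x ∈ Icc s t | nint (β * x + d) ≤ δ} ≤
      ENNReal.ofReal ((β * (t - s) + 2 * δ + 1) * (2 * δ / β)) := by
  refine measure_le_of_subset_biUnion (setOf_nint_le_subset_biUnion hβ s t d δ)
    (fun m _ => ?_) ?_ (by positivity)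
  · rw [Real.volume_Icc]
    exact le_of_eq (congrArg _ (by field_simp; ring))
  · refine (natCast_card_Icc_ceil_floor_le ?_).trans_eq (by ring)
    nlinarith

lemma volume_setOf_nint_le_and_nint_le_le {a b : ℝ} (ha : 1 ≤ a) (hb : 0 < b) {δ₁ δ₂ : ℝ}
    (hδ₁ : 0 ≤ δ₁) (hδ₁' : δ₁ ≤ 1) (hδ₂ : 0 ≤ δ₂) (hδ₂' : δ₂ ≤ 2) (c d : ℝ) :
    volume {x ∈ Icc (0 : ℝ) 1 | nint (a * x + c) ≤ δ₁ ∧ nint (b * x + d) ≤ δ₂} ≤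
      ENNReal.ofReal (16 * δ₁ * δ₂ + 40 * (a / b) * δ₂) := by
  have ha₀ : 0 < a := one_pos.trans_le ha
  have hsub : {x ∈ Icc (0 : ℝ) 1 | nint (a * x + c) ≤ δ₁ ∧ nint (b * x + d) ≤ δ₂} ⊆
      ⋃ m ∈ Finset.Icc ⌈a * 0 + c - δ₁⌉ ⌊a * 1 + c + δ₁⌋,
        {x ∈ Icc ((m - δ₁ - c) / a) ((m + δ₁ - c) / a) | nint (b * x + d) ≤ δ₂} := by
    rintro x ⟨hx, hx₁, hx₂⟩
    obtain ⟨m, hm, hxm⟩ :=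
      mem_iUnion₂.1 (setOf_nint_le_subset_biUnion ha₀ 0 1 c δ₁ ⟨hx, hx₁⟩)
    exact mem_iUnion₂.2 ⟨m, hm, hxm, hx₂⟩
  have hpiece : ∀ m : ℤ,
      volume {x ∈ Icc ((m - δ₁ - c) / a) ((m + δ₁ - c) / a) | nint (b * x + d) ≤ δ₂} ≤
        ENNReal.ofReal ((b * (2 * δ₁ / a) + 2 * δ₂ + 1) * (2 * δ₂ / b)) := by
    intro m
    have hlen : (m + δ₁ - c) / a - (m - δ₁ - c) / a = 2 * δ₁ / a := by field_simp; ring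
    have hle : (m - δ₁ - c) / a ≤ (m + δ₁ - c) / a := by gcongr; linarith
    simpa only [hlen] using volume_setOf_nint_le_le hb hle hδ₂ d
  have hcard : ((Finset.Icc ⌈a * 0 + c - δ₁⌉ ⌊a * 1 + c + δ₁⌋).card : ℝ) ≤ 4 * a :=
    (natCast_card_Icc_ceil_floor_le (by linarith)).trans (by linarith)
  refine (measure_le_of_subset_biUnion hsub (fun m _ => hpiece m) hcard (by positivity)).trans
    (ENNReal.ofReal_le_ofReal ?_)
  have hexpand : 4 * a * ((b * (2 * δ₁ / a) + 2 * δ₂ + 1) * (2 * δ₂ / b)) =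
      16 * δ₁ * δ₂ + 8 * (a / b) * δ₂ * (2 * δ₂ + 1) := by
    field_simp; ring
  rw [hexpand]
  have : 0 ≤ a / b * δ₂ := by positivity
  nlinarith

lemma exists_lt_le_inv_two_pow_of_mul_lt {u v ψ : ℝ} {K : ℕ} (hu : u ≤ 1) (hv : 0 ≤ v)
    (hKu : (2 ^ (K + 1))⁻¹ < u) (huv : u * v < ψ) :
    ∃ k < K + 1, u ≤ (2 ^ k)⁻¹ ∧ v ≤ 2 ^ (k + 1) * ψ := by
  have hu₀ : 0 < u := lt_trans (by positivity) hKu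
  obtain ⟨k, hk, hk'⟩ := exists_nat_pow_near ((one_le_inv₀ hu₀).2 hu) one_lt_two
  have hkK : (2 : ℝ) ^ k < 2 ^ (K + 1) :=
    hk.trans_lt ((inv_lt_comm₀ (by positivity) hu₀).1 hKu)
  refine ⟨k, (pow_lt_pow_iff_right₀ one_lt_two).1 hkK,
    (le_inv_comm₀ (by positivity) hu₀).1 hk, ?_⟩
  calc v = u⁻¹ * (u * v) := by field_simp
    _ ≤ 2 ^ (k + 1) * ψ := by gcongr

lemma setOf_nint_mul_nint_lt_subset (a b c d ψ : ℝ) (K : ℕ) :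
    {x ∈ Icc (0 : ℝ) 1 | nint (a * x + c) * nint (b * x + d) < ψ} ⊆
      {x ∈ Icc (0 : ℝ) 1 | nint (a * x + c) ≤ (2 ^ (K + 1))⁻¹} ∪
        ⋃ k ∈ Finset.range (K + 1),
          {x ∈ Icc (0 : ℝ) 1 |
            nint (a * x + c) ≤ (2 ^ k)⁻¹ ∧ nint (b * x + d) ≤ 2 ^ (k + 1) * ψ} := by
  rintro x ⟨hx, hψ⟩
  rcases le_or_gt (nint (a * x + c)) (2 ^ (K + 1))⁻¹ with hsmall | hlarge
  · exact Or.inl ⟨hx, hsmall⟩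
  obtain ⟨k, hk, hu, hv⟩ := exists_lt_le_inv_two_pow_of_mul_lt
    ((nint_le_half _).trans (by norm_num)) (nint_nonneg _) hlarge hψ
  exact Or.inr (mem_iUnion₂.2 ⟨k, Finset.mem_range.2 hk, hx, hu, hv⟩)

lemma natCast_le_two_mul_clog {K : ℕ} {x : ℝ} (h : 2 ^ K ≤ x) : (K : ℝ) ≤ 2 * clog x := by
  have hlog : K * Real.log 2 ≤ Real.log x := by
    rw [← Real.log_pow]; exact Real.log_le_log (by positivity) h
  have hclog : Real.log x ≤ clog x := le_max_right _ _
  nlinarith [Real.log_two_gt_d9, (Nat.cast_nonneg K : (0 : ℝ) ≤ K)]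

lemma volume_setOf_nint_mul_nint_lt_le_of_two_pow_mul_le {a b : ℝ} (ha : 1 ≤ a) (hb : 0 < b)
    {ψ : ℝ} (hψ : 0 ≤ ψ) {K : ℕ} (hK : 2 ^ K * ψ ≤ 1) (c d : ℝ) :
    volume {x ∈ Icc (0 : ℝ) 1 | nint (a * x + c) * nint (b * x + d) < ψ} ≤
      ENNReal.ofReal (8 * (2 ^ (K + 1))⁻¹ + 32 * ψ * (K + 1) + 160 * (a / b * ψ) * 2 ^ K) := by
  have hsmall : volume {x ∈ Icc (0 : ℝ) 1 | nint (a * x + c) ≤ (2 ^ (K + 1))⁻¹} ≤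
      ENNReal.ofReal (8 * (2 ^ (K + 1))⁻¹) := by
    refine (volume_setOf_nint_le_le (one_pos.trans_le ha) zero_le_one (by positivity) c).trans
      (ENNReal.ofReal_le_ofReal ?_)
    have hδ : ((2 : ℝ) ^ (K + 1))⁻¹ ≤ 1 := inv_le_one_of_one_le₀ (one_le_pow₀ one_le_two)
    calc (a * (1 - 0) + 2 * (2 ^ (K + 1))⁻¹ + 1) * (2 * (2 ^ (K + 1))⁻¹ / a)
        ≤ 4 * a * (2 * (2 ^ (K + 1))⁻¹ / a) := by gcongr; linarith
      _ = 8 * (2 ^ (K + 1))⁻¹ := by field_simp; ring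
  have hpiece : ∀ k ∈ Finset.range (K + 1), volume {x ∈ Icc (0 : ℝ) 1 |
      nint (a * x + c) ≤ (2 ^ k)⁻¹ ∧ nint (b * x + d) ≤ 2 ^ (k + 1) * ψ} ≤
        ENNReal.ofReal (32 * ψ + 80 * (a / b * ψ) * 2 ^ k) := by
    intro k hk
    have hkK : (2 : ℝ) ^ k ≤ 2 ^ K :=
      pow_le_pow_right₀ one_le_two (Nat.lt_succ_iff.1 (Finset.mem_range.1 hk))
    refine (volume_setOf_nint_le_and_nint_le_le ha hb (by positivity)
      (inv_le_one_of_one_le₀ (one_le_pow₀ one_le_two)) (by positivity)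
      (by rw [pow_succ]; nlinarith) c d).trans (ENNReal.ofReal_le_ofReal (le_of_eq ?_))
    field_simp
    ring
  have hsum : ∑ k ∈ Finset.range (K + 1), (32 * ψ + 80 * (a / b * ψ) * 2 ^ k) ≤
      32 * ψ * (K + 1) + 160 * (a / b * ψ) * 2 ^ K := by
    have hgeom : ∑ k ∈ Finset.range (K + 1), (2 : ℝ) ^ k ≤ 2 * 2 ^ K := by
      rw [geom_sum_eq one_lt_two.ne', pow_succ]; linarith
    rw [Finset.sum_add_distrib, ← Finset.mul_sum (a := 80 * (a / b * ψ)), Finset.sum_const,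
      Finset.card_range, nsmul_eq_mul]
    push_cast
    nlinarith [mul_le_mul_of_nonneg_left hgeom (by positivity : (0 : ℝ) ≤ 80 * (a / b * ψ))]
  calc volume {x ∈ Icc (0 : ℝ) 1 | nint (a * x + c) * nint (b * x + d) < ψ}
      ≤ volume {x ∈ Icc (0 : ℝ) 1 | nint (a * x + c) ≤ (2 ^ (K + 1))⁻¹} +
          ∑ k ∈ Finset.range (K + 1), volume {x ∈ Icc (0 : ℝ) 1 |
            nint (a * x + c) ≤ (2 ^ k)⁻¹ ∧ nint (b * x + d) ≤ 2 ^ (k + 1) * ψ} :=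
        (measure_mono (setOf_nint_mul_nint_lt_subset a b c d ψ K)).trans <|
          (measure_union_le _ _).trans (add_le_add le_rfl (measure_biUnion_finset_le _ _))
    _ ≤ ENNReal.ofReal (8 * (2 ^ (K + 1))⁻¹) +
          ∑ k ∈ Finset.range (K + 1), ENNReal.ofReal (32 * ψ + 80 * (a / b * ψ) * 2 ^ k) :=
        add_le_add hsmall (Finset.sum_le_sum hpiece)
    _ = ENNReal.ofReal (8 * (2 ^ (K + 1))⁻¹ +
          ∑ k ∈ Finset.range (K + 1), (32 * ψ + 80 * (a / b * ψ) * 2 ^ k)) := by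
        rw [ENNReal.ofReal_add (by positivity) (by positivity),
          ENNReal.ofReal_sum_of_nonneg (fun k _ => by positivity)]
    _ ≤ _ := ENNReal.ofReal_le_ofReal (by linarith)

lemma volume_setOf_nint_mul_nint_lt_le {a b : ℝ} (ha : 1 ≤ a) (hb : 0 < b) {ψ : ℝ}
    (hψ : 0 < ψ) (c d : ℝ) :
    volume {x ∈ Icc (0 : ℝ) 1 | nint (a * x + c) * nint (b * x + d) < ψ} ≤
      ENNReal.ofReal (200 * (ψ * clog (1 / ψ) + √(ψ * a / b))) := by
  set ε := √(ψ * a / b)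
  have hε₀ : 0 ≤ ε := Real.sqrt_nonneg _
  have hε_sq : a / b * ψ = ε ^ 2 := by rw [Real.sq_sqrt (by positivity)]; ring
  have hclog := one_le_clog (1 / ψ)
  rcases lt_or_ge 1 (max ε ψ) with hη | hη
  · calc volume {x ∈ Icc (0 : ℝ) 1 | nint (a * x + c) * nint (b * x + d) < ψ}
        ≤ volume (Icc (0 : ℝ) 1) := measure_mono (sep_subset _ _)
      _ = ENNReal.ofReal 1 := by rw [Real.volume_Icc, sub_zero]
      _ ≤ _ := ENNReal.ofReal_le_ofReal (by rcases lt_max_iff.1 hη with h | h <;> nlinarith)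
  -- `2 ^ K ψ ≤ 1` gives `K ≲ log (1 / ψ)`; `2 ^ K ε ≤ 1` gives `(a / b) ψ 2 ^ K = ε ^ 2 2 ^ K ≤ ε`.
  have hη₀ : 0 < max ε ψ := lt_max_of_lt_right hψ
  obtain ⟨K, hK, hK'⟩ := exists_nat_pow_near ((one_le_inv₀ hη₀).2 hη) one_lt_two
  have hK_mul : ∀ y ≤ max ε ψ, 0 ≤ y → 2 ^ K * y ≤ 1 := fun y hy hy₀ =>
    calc 2 ^ K * y ≤ (max ε ψ)⁻¹ * max ε ψ := by gcongr
      _ = 1 := inv_mul_cancel₀ hη₀.ne'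
  have hKψ := hK_mul ψ (le_max_right _ _) hψ.le
  have hKε := hK_mul ε (le_max_left _ _) hε₀
  have hK_clog : (K : ℝ) ≤ 2 * clog (1 / ψ) :=
    natCast_le_two_mul_clog ((le_div_iff₀ hψ).2 (by linarith))
  have hK_inv : ((2 : ℝ) ^ (K + 1))⁻¹ < max ε ψ := (inv_lt_comm₀ hη₀ (by positivity)).1 hK'
  refine (volume_setOf_nint_mul_nint_lt_le_of_two_pow_mul_le ha hb hψ.le hKψ c d).trans
    (ENNReal.ofReal_le_ofReal ?_)
  rw [hε_sq]
  nlinarith [max_le_add_of_nonneg hε₀ hψ.le]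

lemma volume_setOf_nint_mul_nint_lt_le_summand {a b : ℝ} (ha : 1 ≤ a) (hab : a ≤ b) (ψ c d : ℝ) :
    volume {x ∈ Icc (0 : ℝ) 1 | nint (a * x + c) * nint (b * x + d) < ψ} ≤
      ENNReal.ofReal (200 * if 0 < ψ then
        ψ * clog (1 / ψ) + (ψ / a) * clog b * clog (1 / ψ) + (ψ * a / b) ^ ((1 : ℝ) / 2)
          + (ψ / (a * b)) ^ ((1 : ℝ) / 2) * clog b else 0) := by
  have ha₀ : 0 < a := one_pos.trans_le ha
  have hb₀ : 0 < b := ha₀.trans_le hab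
  by_cases hψ : 0 < ψ
  · refine (volume_setOf_nint_mul_nint_lt_le ha hb₀ hψ c d).trans (ENNReal.ofReal_le_ofReal ?_)
    have hclog_b := zero_le_one.trans (one_le_clog b)
    have hclog_ψ := zero_le_one.trans (one_le_clog (1 / ψ))
    have h₁ : 0 ≤ (ψ / a) * clog b * clog (1 / ψ) := by positivity
    have h₂ : 0 ≤ (ψ / (a * b)) ^ ((1 : ℝ) / 2) * clog b := by positivity
    rw [if_pos hψ, Real.sqrt_eq_rpow]
    linarith
  · have hempty : {x ∈ Icc (0 : ℝ) 1 | nint (a * x + c) * nint (b * x + d) < ψ} = ∅ :=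
      eq_empty_of_forall_notMem fun x hx =>
        hψ ((mul_nonneg (nint_nonneg _) (nint_nonneg _)).trans_lt hx.2)
    rw [hempty, measure_empty]
    exact zero_le

theorem stmt9_general (a b c d : ℕ → ℝ) (ψ : ℕ → ℝ)
    (ha : ∀ n, 1 ≤ a n) (hab : ∀ n, a n ≤ b n)
    (hsum : Summable (fun n => if 0 < ψ n then
      ψ n * clog (1 / ψ n) + (ψ n / a n) * clog (b n) * clog (1 / ψ n)
        + (ψ n * a n / b n) ^ ((1:ℝ) / 2)
        + (ψ n / (a n * b n)) ^ ((1:ℝ) / 2) * clog (b n) else 0)) :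
    volume {x ∈ Icc (0:ℝ) 1 |
      {n : ℕ | nint (a n * x + c n) * nint (b n * x + d n) < ψ n}.Infinite} = 0 := by
  have hvolume_sum : ∑' n, volume {x ∈ Icc (0 : ℝ) 1 |
      nint (a n * x + c n) * nint (b n * x + d n) < ψ n} ≠ ⊤ :=
    ne_top_of_le_ne_top (hsum.mul_left 200).tsum_ofReal_ne_top <| ENNReal.tsum_le_tsum fun n =>
      volume_setOf_nint_mul_nint_lt_le_summand (ha n) (hab n) (ψ n) (c n) (d n)
  refine measure_mono_null (fun x ⟨hx, hinf⟩ => ?_)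
    (measure_setOfPred_frequently_eq_zero hvolume_sum)
  exact (Nat.frequently_atTop_iff_infinite.2 hinf).mono fun n hn => ⟨hx, hn⟩

theorem stmt9 (a b c d : ℕ → ℝ) (ψ : ℕ → ℝ)
    (ha : ∀ n, 1 ≤ a n) (hab : ∀ n, a n ≤ b n) (hψ : ∀ n, 0 ≤ ψ n)
    (hsum : Summable (fun n => if 0 < ψ n then
      ψ n * clog (1 / ψ n) + (ψ n / a n) * clog (b n) * clog (1 / ψ n)
        + (ψ n * a n / b n) ^ ((1:ℝ) / 2)
        + (ψ n / (a n * b n)) ^ ((1:ℝ) / 2) * clog (b n) else 0)) :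
    volume {x ∈ Icc (0:ℝ) 1 |
      {n : ℕ | nint (a n * x + c n) * nint (b n * x + d n) < ψ n}.Infinite} = 0 :=
  stmt9_general a b c d ψ ha hab hsum
end

section
/- Let $a,b,c,d\in\mathbb{R}$ with $1\le a\le b$, $s\in(0,1)$, $\delta\in(0,1/2]$, and $\rho>1$. Then for the set $A(\delta)=\{x\in[0,1]:\|ax+c\|<\delta,\ \|bx+d\|<\delta\}$, one has $\mathcal{H}^s_\rho(A(\delta))\le C_s\,(b^{1-s}\delta^{1+s}L+ab^{-s}\delta^s L)$, where $C_s$ depends only on $s$ and $L=\max\{1,\frac{\log b}{a}\}$. -/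
open Set
open scoped ENNReal

/-- Hausdorff `s`-pre-measure at scale `ρ`: infimum of `∑ rᵢ^s` over countable covers
of `F` by balls of radius `rᵢ < ρ`. -/
noncomputable def preH (s ρ : ℝ) (F : Set ℝ) : ℝ≥0∞ :=
  ⨅ (c : ℕ → ℝ) (r : ℕ → ℝ) (_ : ∀ n, 0 < r n ∧ r n < ρ)
    (_ : F ⊆ ⋃ n, Metric.ball (c n) (r n)), ∑' n, ENNReal.ofReal (r n ^ s)

/-! A point `x ∈ A(δ)` lies within `δ / b` of `(k - d) / b`, where `k` is the integer nearest to
`b x + d`. Fixing the integer `m` nearest to `a x + c` pins `x` down to within `δ / a`, so only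
about `4 δ b / a + 1` values of `k` are possible for each of the about `a + 2` values of `m`.
Hence `A(δ)` is covered by at most `12 δ b + 3 a` balls of radius `δ / b`, and
`(12 δ b + 3 a) (δ / b) ^ s = 12 b ^ (1 - s) δ ^ (1 + s) + 3 a b ^ (-s) δ ^ s`. -/

lemma exists_radii_lt_tsum_rpow_le {s ρ ε : ℝ} (hs : 0 < s) (hρ : 0 < ρ) (hε : 0 < ε) :
    ∃ t : ℕ → ℝ, (∀ n, 0 < t n ∧ t n < ρ) ∧ ∑' n, ENNReal.ofReal (t n ^ s) ≤ ENNReal.ofReal ε := by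
  set η := min ε (ρ ^ s)
  have hη : 0 < η := lt_min hε (by positivity)
  have hηρ : ∀ n : ℕ, η / 2 / 2 ^ n < ρ ^ s := fun n =>
    calc η / 2 / 2 ^ n ≤ η / 2 := div_le_self (by positivity) (one_le_pow₀ one_le_two)
      _ < η := half_lt_self hη
      _ ≤ ρ ^ s := min_le_right _ _
  refine ⟨fun n => (η / 2 / 2 ^ n) ^ s⁻¹, fun n => ⟨by positivity, ?_⟩, ?_⟩
  · calc (η / 2 / 2 ^ n) ^ s⁻¹ < (ρ ^ s) ^ s⁻¹ := by gcongr; exact hηρ n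
      _ = ρ := Real.rpow_rpow_inv hρ.le hs.ne'
  · simp_rw [Real.rpow_inv_rpow (by positivity : 0 ≤ η / 2 / 2 ^ _) hs.ne']
    rw [← ENNReal.ofReal_tsum_of_nonneg (fun n => by positivity) (summable_geometric_two' η),
      tsum_geometric_two']
    exact ENNReal.ofReal_le_ofReal (min_le_left _ _)

lemma preH_le_card_mul_of_subset_biUnion_ball {s ρ r : ℝ} {F : Set ℝ} (S : Finset ℝ)
    (hs : 0 < s) (hr : 0 < r) (hrρ : r < ρ) (hF : F ⊆ ⋃ z ∈ S, Metric.ball z r) :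
    preH s ρ F ≤ S.card * ENNReal.ofReal (r ^ s) := by
  refine ENNReal.le_of_forall_pos_le_add fun ε hε _ => ?_
  obtain ⟨t, ht, ht_sum⟩ := exists_radii_lt_tsum_rpow_le hs (hr.trans hrρ) (NNReal.coe_pos.2 hε)
  set N := S.card
  let center : ℕ → ℝ := fun n => S.toList.getD n 0
  let radius : ℕ → ℝ := fun n => if n < N then r else t n
  have h_radius : ∀ n, 0 < radius n ∧ radius n < ρ := fun n => by
    by_cases hn : n < N <;> simp [radius, hn, hr, hrρ, ht n]
  have h_cover : F ⊆ ⋃ n, Metric.ball (center n) (radius n) := by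
    intro x hx
    obtain ⟨z, hzS, hxz⟩ := mem_iUnion₂.1 (hF hx)
    obtain ⟨n, hn, rfl⟩ := List.getElem_of_mem (Finset.mem_toList.2 hzS)
    have hnN : n < N := by rwa [Finset.length_toList] at hn
    refine mem_iUnion.2 ⟨n, ?_⟩
    rwa [Metric.mem_ball, show center n = S.toList[n] from List.getD_eq_getElem _ _ hn,
      show radius n = r from if_pos hnN]
  have h_term : ∀ n, ENNReal.ofReal (radius n ^ s)
      ≤ (if n < N then ENNReal.ofReal (r ^ s) else 0) + ENNReal.ofReal (t n ^ s) := fun n => by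
    by_cases hn : n < N <;> simp [radius, hn]
  have h_head : ∑' n : ℕ, (if n < N then ENNReal.ofReal (r ^ s) else 0)
      = N * ENNReal.ofReal (r ^ s) := by
    rw [tsum_eq_sum (s := Finset.range N) fun n hn => if_neg (by simpa using hn),
      Finset.sum_congr rfl fun n hn => if_pos (Finset.mem_range.1 hn)]
    simp
  calc preH s ρ F ≤ ∑' n, ENNReal.ofReal (radius n ^ s) :=
        iInf₂_le_of_le center radius (iInf₂_le_of_le h_radius h_cover le_rfl)
    _ ≤ ∑' n, ((if n < N then ENNReal.ofReal (r ^ s) else 0) + ENNReal.ofReal (t n ^ s)) :=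
        ENNReal.tsum_le_tsum h_term
    _ ≤ N * ENNReal.ofReal (r ^ s) + ε := by
        rw [ENNReal.tsum_add, h_head]
        exact add_le_add_right (ht_sum.trans_eq ENNReal.ofReal_coe_nnreal) _

lemma card_Icc_ceil_floor_le {u v : ℝ} (h : u ≤ v) :
    ((Finset.Icc ⌈u⌉ ⌊v⌋).card : ℝ) ≤ v - u + 1 := by
  rw [Int.card_Icc]
  rcases le_or_gt 0 (⌊v⌋ + 1 - ⌈u⌉) with h0 | h0
  · rw [← Int.cast_natCast, Int.toNat_of_nonneg h0]
    push_cast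
    linarith [Int.floor_le v, Int.le_ceil u]
  · rw [Int.toNat_of_nonpos h0.le, Nat.cast_zero]
    linarith

lemma card_image_Icc_ceil_floor_le {α : Type*} [DecidableEq α] (f : ℤ → α) {u w : ℝ}
    (hw : 0 ≤ w) : (((Finset.Icc ⌈u - w⌉ ⌊u + w⌋).image f).card : ℝ) ≤ 2 * w + 1 :=
  calc (((Finset.Icc ⌈u - w⌉ ⌊u + w⌋).image f).card : ℝ)
      ≤ (Finset.Icc ⌈u - w⌉ ⌊u + w⌋).card := by exact_mod_cast Finset.card_image_le
    _ ≤ 2 * w + 1 := by linarith [card_Icc_ceil_floor_le (by linarith : u - w ≤ u + w)]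

/-- `m` runs over the candidates for the integer nearest to `a x + c`, and `k` over those for the
integer nearest to `b x + d` once `m` is fixed. -/
noncomputable def coverCenters (a b c d δ : ℝ) : Finset ℝ :=
  (Finset.Icc ⌈c - δ⌉ ⌊a + c + δ⌋).biUnion fun m : ℤ =>
    (Finset.Icc ⌈d + b * (m - c) / a - (δ + δ * b / a)⌉
      ⌊d + b * (m - c) / a + (δ + δ * b / a)⌋).image fun k : ℤ => (k - d) / b

lemma subset_biUnion_ball_coverCenters {a b c d δ : ℝ} (ha : 0 < a) (hb : 0 < b) :
    {x ∈ Icc (0:ℝ) 1 | nint (a * x + c) < δ ∧ nint (b * x + d) < δ}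
      ⊆ ⋃ z ∈ coverCenters a b c d δ, Metric.ball z (δ / b) := by
  rintro x ⟨⟨hx0, hx1⟩, hm, hk⟩
  set m := round (a * x + c)
  set k := round (b * x + d)
  replace hm : |a * x + c - m| < δ := hm
  replace hk : |b * x + d - k| < δ := hk
  have hkm : |(k : ℝ) - (d + b * (m - c) / a)| < δ + δ * b / a := by
    have h_split : (k : ℝ) - (d + b * (m - c) / a)
        = -(b * x + d - k) + b / a * (a * x + c - m) := by
      field_simp
      ring
    calc |(k : ℝ) - (d + b * (m - c) / a)|
        ≤ |b * x + d - k| + b / a * |a * x + c - m| := by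
          rw [h_split]
          refine (abs_add_le _ _).trans_eq ?_
          rw [abs_neg, abs_mul, abs_of_pos (div_pos hb ha)]
      _ < δ + b / a * δ := by gcongr
      _ = δ + δ * b / a := by ring
  have hax : a * x ≤ a := mul_le_of_le_one_right ha.le hx1
  obtain ⟨hm₁, hm₂⟩ := abs_lt.1 hm
  obtain ⟨hk₁, hk₂⟩ := abs_lt.1 hkm
  simp only [coverCenters, Finset.mem_biUnion, Finset.mem_image, Finset.mem_Icc, mem_iUnion,
    exists_prop]
  refine ⟨(k - d) / b, ⟨m, ⟨Int.ceil_le.2 ?_, Int.le_floor.2 ?_⟩, k,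
    ⟨Int.ceil_le.2 ?_, Int.le_floor.2 ?_⟩, rfl⟩, ?_⟩
  · nlinarith
  · linarith
  · linarith
  · linarith
  · rw [Metric.mem_ball, Real.dist_eq,
      show x - (k - d) / b = (b * x + d - k) / b by field_simp; ring, abs_div, abs_of_pos hb]
    gcongr

lemma card_coverCenters_le {a b c d δ : ℝ} (ha : 1 ≤ a) (hab : a ≤ b) (hδ : 0 ≤ δ)
    (hδ₂ : δ ≤ 1 / 2) : ((coverCenters a b c d δ).card : ℝ) ≤ 12 * δ * b + 3 * a := by
  set q := δ * b / a
  have ha₀ : 0 < a := one_pos.trans_le ha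
  have haq : a * q = δ * b := mul_div_cancel₀ _ ha₀.ne'
  have hδq : δ ≤ q := (le_div_iff₀ ha₀).2 (by nlinarith)
  have hqb : q ≤ δ * b := div_le_self (by nlinarith) ha
  calc ((coverCenters a b c d δ).card : ℝ)
      ≤ ∑ m ∈ Finset.Icc ⌈c - δ⌉ ⌊a + c + δ⌋, ((Finset.Icc ⌈d + b * (m - c) / a - (δ + q)⌉
          ⌊d + b * (m - c) / a + (δ + q)⌋).image fun k : ℤ => (k - d) / b).card := by
        exact_mod_cast Finset.card_biUnion_le
    _ ≤ (Finset.Icc ⌈c - δ⌉ ⌊a + c + δ⌋).card * (2 * (δ + q) + 1) := by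
        rw [Nat.cast_sum]
        exact (Finset.sum_le_card_nsmul _ _ _ fun m _ =>
          card_image_Icc_ceil_floor_le _ (by linarith)).trans_eq (nsmul_eq_mul _ _)
    _ ≤ (a + 2 * δ + 1) * (2 * (δ + q) + 1) := by
        refine mul_le_mul_of_nonneg_right ?_ (by linarith)
        linarith [card_Icc_ceil_floor_le (by linarith : c - δ ≤ a + c + δ)]
    _ ≤ (a + 2) * (4 * q + 1) :=
        mul_le_mul (by linarith) (by linarith) (by linarith) (by linarith)
    _ ≤ 12 * δ * b + 3 * a := by nlinarith

lemma preH_le_of_two_nint_lt {s a b c d δ ρ : ℝ} (hs : 0 < s) (ha : 1 ≤ a) (hab : a ≤ b)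
    (hδ : 0 < δ) (hδ₂ : δ ≤ 1 / 2) (hδρ : δ < ρ) :
    preH s ρ {x ∈ Icc (0:ℝ) 1 | nint (a * x + c) < δ ∧ nint (b * x + d) < δ}
      ≤ ENNReal.ofReal (12 * (b ^ (1 - s) * δ ^ (1 + s)) + 3 * (a * b ^ (-s) * δ ^ s)) := by
  have hb : 0 < b := one_pos.trans_le (ha.trans hab)
  have hδb : δ / b < ρ := (div_le_self hδ.le (ha.trans hab)).trans_lt hδρ
  calc preH s ρ {x ∈ Icc (0:ℝ) 1 | nint (a * x + c) < δ ∧ nint (b * x + d) < δ}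
      ≤ (coverCenters a b c d δ).card * ENNReal.ofReal ((δ / b) ^ s) :=
        preH_le_card_mul_of_subset_biUnion_ball _ hs (div_pos hδ hb) hδb
          (subset_biUnion_ball_coverCenters (one_pos.trans_le ha) hb)
    _ = ENNReal.ofReal ((coverCenters a b c d δ).card * (δ / b) ^ s) := by
        rw [ENNReal.ofReal_mul (Nat.cast_nonneg _), ENNReal.ofReal_natCast]
    _ ≤ ENNReal.ofReal ((12 * δ * b + 3 * a) * (δ / b) ^ s) := by
        gcongr
        exact card_coverCenters_le ha hab hδ.le hδ₂
    _ = ENNReal.ofReal (12 * (b ^ (1 - s) * δ ^ (1 + s)) + 3 * (a * b ^ (-s) * δ ^ s)) := by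
        rw [Real.div_rpow hδ.le hb.le, Real.rpow_add hδ, Real.rpow_sub hb, Real.rpow_neg hb.le,
          Real.rpow_one, Real.rpow_one]
        congr 1
        field_simp

theorem stmt19_general (s : ℝ) (hs0 : 0 < s) :
    ∃ C : ℝ, 0 < C ∧ ∀ (a b c d δ ρ : ℝ), 1 ≤ a → a ≤ b →
      0 < δ → δ ≤ 1 / 2 → 1 < ρ →
      preH s ρ {x ∈ Icc (0:ℝ) 1 | nint (a * x + c) < δ ∧ nint (b * x + d) < δ}
        ≤ ENNReal.ofReal (C * (b ^ (1 - s) * δ ^ (1 + s) * max 1 (clog b / a)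
            + a * b ^ (-s) * δ ^ s * max 1 (clog b / a))) := by
  refine ⟨12, by norm_num, fun a b c d δ ρ ha hab hδ hδ₂ hρ => ?_⟩
  refine (preH_le_of_two_nint_lt hs0 ha hab hδ hδ₂ (by linarith)).trans (ENNReal.ofReal_le_ofReal ?_)
  have hb : 0 < b := one_pos.trans_le (ha.trans hab)
  have hL : 1 ≤ max 1 (clog b / a) := le_max_left _ _
  have hX : b ^ (1 - s) * δ ^ (1 + s) ≤ b ^ (1 - s) * δ ^ (1 + s) * max 1 (clog b / a) :=
    le_mul_of_one_le_right (by positivity) hL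
  have hY : a * b ^ (-s) * δ ^ s ≤ a * b ^ (-s) * δ ^ s * max 1 (clog b / a) :=
    le_mul_of_one_le_right (by positivity) hL
  have hY₀ : 0 ≤ a * b ^ (-s) * δ ^ s := by positivity
  linarith

theorem stmt19 (s : ℝ) (hs0 : 0 < s) (hs1 : s < 1) :
    ∃ C : ℝ, 0 < C ∧ ∀ (a b c d δ ρ : ℝ), 1 ≤ a → a ≤ b →
      0 < δ → δ ≤ 1 / 2 → 1 < ρ →
      preH s ρ {x ∈ Icc (0:ℝ) 1 | nint (a * x + c) < δ ∧ nint (b * x + d) < δ}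
        ≤ ENNReal.ofReal (C * (b ^ (1 - s) * δ ^ (1 + s) * max 1 (clog b / a)
            + a * b ^ (-s) * δ ^ s * max 1 (clog b / a))) :=
  stmt19_general s hs0
end
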